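/- Let X and Y be distributions over {0,1}^n with Hamming earth mover's distance greater than ε, where Y has support size at most m'' and X has support size at most m'. Fix a coordinate set J ⊆ [n] such that for every x in the support of X and every y in the support of Y, Δ_H(x_J, y_J) ≥ 0.5·Δ_H(x,y) − 0.2ε (relative Hamming distance computed on the coordinates of J). Then the Hamming earth mover's distance between the projected distributions X_J and Y_J (over {0,1}^{|J|}) is greater than 0.3ε, and hence their total variation distance is also greater than 0.3ε. -/

import Mathlib

/-!
A coupling `W'` of the projections `X_J`, `Y_J` lifts to a coupling of `X` and `Y` with the same
projected cost: draw the projected pair from `W'`, then `x` and `y` independently from their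
fibres. On the supports `Δ(x, y) ≤ 2 Δ(x_J, y_J) + 0.4ε`, hence
`ε < EMD(X, Y) ≤ 2 EMD(X_J, Y_J) + 0.4ε`. Finally `EMD ≤ TV` for any cost in `[0, 1]` vanishing on
the diagonal, witnessed by the maximal coupling: keep the common mass `min(P, Q)` on the diagonal
and couple the two excesses independently.
-/

open Finset
open scoped Classical

noncomputable section

/-- A probability distribution on a finite type, given as a mass function. -/
def IsDist {α : Type*} [Fintype α] (P : α → ℝ) : Prop :=
  (∀ x, 0 ≤ P x) ∧ ∑ x, P x = 1

/-- A coupling of two mass functions. -/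
def IsCoupling {α : Type*} [Fintype α] (P Q : α → ℝ) (W : α → α → ℝ) : Prop :=
  (∀ x y, 0 ≤ W x y) ∧ (∀ x, ∑ y, W x y = P x) ∧ (∀ y, ∑ x, W x y = Q y)

/-- Earth mover's distance with respect to a cost function `d`. -/
def emd {α : Type*} [Fintype α] (d : α → α → ℝ) (P Q : α → ℝ) : ℝ :=
  sInf {c : ℝ | ∃ W, IsCoupling P Q W ∧ c = ∑ x, ∑ y, W x y * d x y}

/-- Total variation distance. -/
def tv {α : Type*} [Fintype α] (P Q : α → ℝ) : ℝ :=
  (∑ x, |P x - Q x|) / 2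

/-- Relative Hamming distance on `n`-bit strings. -/
def relHamming {n : ℕ} (x y : Fin n → Bool) : ℝ :=
  (hammingDist x y : ℝ) / n

/-- Support size of a mass function. -/
def suppCard {α : Type*} [Fintype α] (P : α → ℝ) : ℕ :=
  (univ.filter fun x => P x ≠ 0).card

/-- Pushforward of a mass function along a map. -/
def push {α β : Type*} [Fintype α] (f : α → β) (P : α → ℝ) : β → ℝ :=
  fun y => ∑ x ∈ univ.filter (fun x => f x = y), P x

variable {α β : Type*} [Fintype α]

lemma sum_mul_comp_eq_sum_push [Fintype β] (f : α → β) (P : α → ℝ) (g : β → ℝ) :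
    ∑ x, P x * g (f x) = ∑ u, push f P u * g u := by
  rw [← Finset.sum_fiberwise univ f (fun x => P x * g (f x))]
  refine Finset.sum_congr rfl fun u _ => ?_
  rw [push, Finset.sum_mul]
  exact Finset.sum_congr rfl fun x hx => by rw [(mem_filter.1 hx).2]

lemma le_push_apply (f : α → β) {P : α → ℝ} (hP : ∀ x, 0 ≤ P x) (x : α) :
    P x ≤ push f P (f x) :=
  Finset.single_le_sum (fun y _ => hP y) (by simp)

lemma sum_div_push_mul_comp [Fintype β] (f : α → β) (P : α → ℝ) {g : β → ℝ}
    (hg : ∀ u, push f P u = 0 → g u = 0) :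
    ∑ x, P x / push f P (f x) * g (f x) = ∑ u, g u := calc
  _ = ∑ x, P x * (g (f x) / push f P (f x)) :=
    Finset.sum_congr rfl fun x _ => by ring
  _ = ∑ u, push f P u * (g u / push f P u) :=
    sum_mul_comp_eq_sum_push f P fun u => g u / push f P u
  _ = ∑ u, g u := Finset.sum_congr rfl fun u _ => by
    rw [← mul_div_assoc, mul_div_cancel_left_of_imp (hg u)]

lemma IsDist.push [Fintype β] {P : α → ℝ} (hP : IsDist P) (f : α → β) : IsDist (push f P) := by
  refine ⟨fun u => Finset.sum_nonneg fun x _ => hP.1 x, ?_⟩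
  simpa [hP.2] using (sum_mul_comp_eq_sum_push f P fun _ => (1 : ℝ)).symm

namespace IsCoupling

variable {P Q : α → ℝ} {W : α → α → ℝ}

lemma apply_eq_zero_of_left (hW : IsCoupling P Q W) {x : α} (hx : P x = 0) (y : α) :
    W x y = 0 := by
  have h := Finset.single_le_sum (fun y' _ => hW.1 x y') (mem_univ y)
  rw [hW.2.1 x, hx] at h
  exact le_antisymm h (hW.1 x y)

lemma apply_eq_zero_of_right (hW : IsCoupling P Q W) {y : α} (hy : Q y = 0) (x : α) :
    W x y = 0 := by
  have h := Finset.single_le_sum (fun x' _ => hW.1 x' y) (mem_univ x)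
  rw [hW.2.2 y, hy] at h
  exact le_antisymm h (hW.1 x y)

lemma sum_sum_eq_one (hW : IsCoupling P Q W) (hP : IsDist P) : ∑ x, ∑ y, W x y = 1 := by
  rw [Finset.sum_congr rfl fun x _ => hW.2.1 x, hP.2]

lemma sum_mul_le_sum_mul (hW : IsCoupling P Q W) {c c' : α → α → ℝ}
    (h : ∀ x y, P x ≠ 0 → Q y ≠ 0 → c x y ≤ c' x y) :
    ∑ x, ∑ y, W x y * c x y ≤ ∑ x, ∑ y, W x y * c' x y := by
  refine Finset.sum_le_sum fun x _ => Finset.sum_le_sum fun y _ => ?_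
  by_cases hx : P x = 0
  · simp [hW.apply_eq_zero_of_left hx y]
  by_cases hy : Q y = 0
  · simp [hW.apply_eq_zero_of_right hy x]
  exact mul_le_mul_of_nonneg_left (h x y hx hy) (hW.1 x y)

end IsCoupling

lemma isCoupling_mul {P Q : α → ℝ} (hP : IsDist P) (hQ : IsDist Q) :
    IsCoupling P Q fun x y => P x * Q y := by
  refine ⟨fun x y => mul_nonneg (hP.1 x) (hQ.1 y), fun x => ?_, fun y => ?_⟩
  · rw [← Finset.mul_sum, hQ.2, mul_one]
  · rw [← Finset.sum_mul, hP.2, one_mul]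

section Emd

variable {d : α → α → ℝ} {P Q : α → ℝ}

lemma emd_le_sum_mul (hd : ∀ x y, 0 ≤ d x y) {W : α → α → ℝ} (hW : IsCoupling P Q W) :
    emd d P Q ≤ ∑ x, ∑ y, W x y * d x y := by
  refine csInf_le ⟨0, ?_⟩ ⟨W, hW, rfl⟩
  rintro c ⟨W', hW', rfl⟩
  exact Finset.sum_nonneg fun x _ => Finset.sum_nonneg fun y _ => mul_nonneg (hW'.1 x y) (hd x y)

lemma le_emd (hP : IsDist P) (hQ : IsDist Q) {c : ℝ}
    (h : ∀ W, IsCoupling P Q W → c ≤ ∑ x, ∑ y, W x y * d x y) : c ≤ emd d P Q := by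
  refine le_csInf ⟨_, _, isCoupling_mul hP hQ, rfl⟩ ?_
  rintro _ ⟨W, hW, rfl⟩
  exact h W hW

end Emd

section Lift

variable [Fintype β] (f : α → β)

def liftCoupling (P Q : α → ℝ) (W' : β → β → ℝ) (x y : α) : ℝ :=
  P x / push f P (f x) * (Q y / push f Q (f y) * W' (f x) (f y))

variable {P Q : α → ℝ} {W' : β → β → ℝ}

lemma sum_sum_liftCoupling_mul (hW' : IsCoupling (push f P) (push f Q) W') (c : β → β → ℝ) :
    ∑ x, ∑ y, liftCoupling f P Q W' x y * c (f x) (f y) = ∑ u, ∑ v, W' u v * c u v := calc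
  _ = ∑ x, P x / push f P (f x) * ∑ y, Q y / push f Q (f y) * (W' (f x) (f y) * c (f x) (f y)) := by
    simp only [liftCoupling, Finset.mul_sum, mul_assoc]
  _ = ∑ x, P x / push f P (f x) * ∑ v, W' (f x) v * c (f x) v :=
    Finset.sum_congr rfl fun x _ => congrArg _ <| sum_div_push_mul_comp f Q
      (g := fun v => W' (f x) v * c (f x) v) fun v hv => by simp [hW'.apply_eq_zero_of_right hv]
  _ = ∑ u, ∑ v, W' u v * c u v :=
    sum_div_push_mul_comp f P (g := fun u => ∑ v, W' u v * c u v) fun u hu => by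
      simp [hW'.apply_eq_zero_of_left hu]

lemma isCoupling_liftCoupling (hP : IsDist P) (hQ : IsDist Q)
    (hW' : IsCoupling (push f P) (push f Q) W') : IsCoupling P Q (liftCoupling f P Q W') := by
  have hP0 : ∀ x, push f P (f x) = 0 → P x = 0 := fun x h =>
    le_antisymm (h ▸ le_push_apply f hP.1 x) (hP.1 x)
  have hQ0 : ∀ y, push f Q (f y) = 0 → Q y = 0 := fun y h =>
    le_antisymm (h ▸ le_push_apply f hQ.1 y) (hQ.1 y)
  refine ⟨fun x y => ?_, fun x => ?_, fun y => ?_⟩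
  · have := (hP.push f).1 (f x)
    have := (hQ.push f).1 (f y)
    have := hW'.1 (f x) (f y)
    have := hP.1 x
    have := hQ.1 y
    unfold liftCoupling
    positivity
  · calc ∑ y, liftCoupling f P Q W' x y
        = P x / push f P (f x) * ∑ y, Q y / push f Q (f y) * W' (f x) (f y) := by
          rw [Finset.mul_sum]; rfl
      _ = P x / push f P (f x) * push f P (f x) := by
          rw [sum_div_push_mul_comp f Q (g := W' (f x)) fun v hv =>
            hW'.apply_eq_zero_of_right hv _, hW'.2.1]
      _ = P x := div_mul_cancel_of_imp (hP0 x)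
  · calc ∑ x, liftCoupling f P Q W' x y
        = ∑ x, P x / push f P (f x) * (Q y / push f Q (f y) * W' (f x) (f y)) := rfl
      _ = ∑ u, Q y / push f Q (f y) * W' u (f y) :=
          sum_div_push_mul_comp f P (g := fun u => Q y / push f Q (f y) * W' u (f y))
            fun u hu => by simp [hW'.apply_eq_zero_of_left hu]
      _ = Q y / push f Q (f y) * push f Q (f y) := by rw [← Finset.mul_sum, hW'.2.2]
      _ = Q y := div_mul_cancel_of_imp (hQ0 y)

theorem emd_le_mul_emd_push_add {d : α → α → ℝ} {d' : β → β → ℝ} (hd : ∀ x y, 0 ≤ d x y)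
    {a b : ℝ} (ha : 0 < a) (hP : IsDist P) (hQ : IsDist Q)
    (h : ∀ x y, P x ≠ 0 → Q y ≠ 0 → d x y ≤ a * d' (f x) (f y) + b) :
    emd d P Q ≤ a * emd d' (push f P) (push f Q) + b := by
  suffices (emd d P Q - b) / a ≤ emd d' (push f P) (push f Q) by
    rw [div_le_iff₀ ha] at this; linarith
  refine le_emd (hP.push f) (hQ.push f) fun W' hW' => ?_
  have hW := isCoupling_liftCoupling f hP hQ hW'
  rw [div_le_iff₀' ha]
  calc emd d P Q - b
      ≤ ∑ x, ∑ y, liftCoupling f P Q W' x y * d x y - b := by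
        linarith [emd_le_sum_mul hd hW]
    _ ≤ ∑ x, ∑ y, liftCoupling f P Q W' x y * (a * d' (f x) (f y) + b) - b := by
        linarith [hW.sum_mul_le_sum_mul h]
    _ = a * ∑ x, ∑ y, liftCoupling f P Q W' x y * d' (f x) (f y) +
          b * ∑ x, ∑ y, liftCoupling f P Q W' x y - b := by
        rw [Finset.mul_sum, Finset.mul_sum, ← Finset.sum_add_distrib]
        congr 1
        refine Finset.sum_congr rfl fun x _ => ?_
        rw [Finset.mul_sum, Finset.mul_sum, ← Finset.sum_add_distrib]
        exact Finset.sum_congr rfl fun y _ => by ring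
    _ = a * ∑ u, ∑ v, W' u v * d' u v := by
        rw [sum_sum_liftCoupling_mul f hW', hW.sum_sum_eq_one hP]
        ring

end Lift

section MaximalCoupling

lemma tv_nonneg (P Q : α → ℝ) : 0 ≤ tv P Q := by
  unfold tv
  positivity

variable {P Q : α → ℝ}

lemma abs_sub_eq_add_sub_two_mul_min (a b : ℝ) : |a - b| = a + b - 2 * min a b := by
  have := min_add_max a b
  rw [← max_sub_min_eq_abs b a, max_comm, min_comm]
  linarith

lemma sum_sub_min_eq_tv_left (hP : IsDist P) (hQ : IsDist Q) :
    ∑ x, (P x - min (P x) (Q x)) = tv P Q := by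
  simp only [tv, abs_sub_eq_add_sub_two_mul_min, Finset.sum_sub_distrib, Finset.sum_add_distrib,
    ← Finset.mul_sum, hP.2, hQ.2]
  ring

lemma sum_sub_min_eq_tv_right (hP : IsDist P) (hQ : IsDist Q) :
    ∑ x, (Q x - min (P x) (Q x)) = tv P Q := by
  simp only [tv, abs_sub_eq_add_sub_two_mul_min, Finset.sum_sub_distrib, Finset.sum_add_distrib,
    ← Finset.mul_sum, hP.2, hQ.2]
  ring

/-- When `tv P Q = 0` both excesses over `min P Q` vanish, so the junk value of the division is
harmless. -/
def maximalCoupling (P Q : α → ℝ) (x y : α) : ℝ :=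
  (if x = y then min (P x) (Q x) else 0) +
    (P x - min (P x) (Q x)) * (Q y - min (P y) (Q y)) / tv P Q

lemma isCoupling_maximalCoupling (hP : IsDist P) (hQ : IsDist Q) :
    IsCoupling P Q (maximalCoupling P Q) := by
  have hexP : ∀ x, 0 ≤ P x - min (P x) (Q x) := fun x => sub_nonneg.2 (min_le_left _ _)
  have hexQ : ∀ x, 0 ≤ Q x - min (P x) (Q x) := fun x => sub_nonneg.2 (min_le_right _ _)
  refine ⟨fun x y => ?_, fun x => ?_, fun y => ?_⟩
  · have hdiag : 0 ≤ if x = y then min (P x) (Q x) else 0 := by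
      split_ifs
      exacts [le_min (hP.1 x) (hQ.1 x), le_rfl]
    have := hexP x
    have := hexQ y
    have := tv_nonneg P Q
    unfold maximalCoupling
    positivity
  · have hle : P x - min (P x) (Q x) ≤ tv P Q :=
      sum_sub_min_eq_tv_left hP hQ ▸ Finset.single_le_sum (fun x _ => hexP x) (mem_univ x)
    simp only [maximalCoupling, Finset.sum_add_distrib, Finset.sum_ite_eq, mem_univ, if_true,
      ← Finset.sum_div, ← Finset.mul_sum, sum_sub_min_eq_tv_right hP hQ]
    rw [mul_comm, mul_div_cancel_left_of_imp fun h => le_antisymm (h ▸ hle) (hexP x)]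
    ring
  · have hle : Q y - min (P y) (Q y) ≤ tv P Q :=
      sum_sub_min_eq_tv_right hP hQ ▸ Finset.single_le_sum (fun x _ => hexQ x) (mem_univ y)
    simp only [maximalCoupling, Finset.sum_add_distrib, Finset.sum_ite_eq', mem_univ, if_true,
      ← Finset.sum_div, ← Finset.sum_mul, sum_sub_min_eq_tv_left hP hQ]
    rw [mul_div_cancel_left_of_imp fun h => le_antisymm (h ▸ hle) (hexQ y)]
    ring

lemma sum_sum_maximalCoupling_mul_le (hP : IsDist P) (hQ : IsDist Q) {d : α → α → ℝ}
    (hd_self : ∀ x, d x x = 0) (hd_le_one : ∀ x y, d x y ≤ 1) :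
    ∑ x, ∑ y, maximalCoupling P Q x y * d x y ≤ tv P Q := by
  have hterm : ∀ x y, maximalCoupling P Q x y * d x y ≤
      (P x - min (P x) (Q x)) * (Q y - min (P y) (Q y)) / tv P Q := by
    intro x y
    have hex : 0 ≤ (P x - min (P x) (Q x)) * (Q y - min (P y) (Q y)) / tv P Q := by
      have := sub_nonneg.2 (min_le_left (P x) (Q x))
      have := sub_nonneg.2 (min_le_right (P y) (Q y))
      have := tv_nonneg P Q
      positivity
    by_cases hxy : x = y
    · subst hxy
      simpa [hd_self] using hex
    · simpa [maximalCoupling, hxy] using mul_le_of_le_one_right hex (hd_le_one x y)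
  calc ∑ x, ∑ y, maximalCoupling P Q x y * d x y
      ≤ ∑ x, ∑ y, (P x - min (P x) (Q x)) * (Q y - min (P y) (Q y)) / tv P Q :=
        Finset.sum_le_sum fun x _ => Finset.sum_le_sum fun y _ => hterm x y
    _ = (∑ x, (P x - min (P x) (Q x))) * (∑ y, (Q y - min (P y) (Q y))) / tv P Q := by
        simp only [Finset.sum_mul_sum, Finset.sum_div]
    _ = tv P Q * tv P Q / tv P Q := by
        rw [sum_sub_min_eq_tv_left hP hQ, sum_sub_min_eq_tv_right hP hQ]
    _ = tv P Q := mul_self_div_self _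

theorem emd_le_tv {d : α → α → ℝ} (hd : ∀ x y, 0 ≤ d x y) (hd_self : ∀ x, d x x = 0)
    (hd_le_one : ∀ x y, d x y ≤ 1) (hP : IsDist P) (hQ : IsDist Q) :
    emd d P Q ≤ tv P Q :=
  (emd_le_sum_mul hd (isCoupling_maximalCoupling hP hQ)).trans
    (sum_sum_maximalCoupling_mul_le hP hQ hd_self hd_le_one)

end MaximalCoupling

lemma hammingDist_div_card_le_one {ι : Type*} [Fintype ι] {β : ι → Type*}
    [∀ i, DecidableEq (β i)] (x y : ∀ i, β i) : (hammingDist x y : ℝ) / Fintype.card ι ≤ 1 :=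
  div_le_one_of_le₀ (by exact_mod_cast hammingDist_le_card_fintype) (Nat.cast_nonneg _)

theorem projected_distributions_far_general {n : ℕ} (ε : ℝ)
    (X Y : (Fin n → Bool) → ℝ) (hX : IsDist X) (hY : IsDist Y)
    (hfar : ε < emd relHamming X Y)
    (J : Finset (Fin n))
    (hJ : ∀ x y : Fin n → Bool, X x ≠ 0 → Y y ≠ 0 →
      0.5 * relHamming x y - 0.2 * ε ≤
        (hammingDist (fun i : J => x i.1) (fun i : J => y i.1) : ℝ) / J.card) :
    0.3 * ε < emd (fun u v : (J → Bool) => (hammingDist u v : ℝ) / J.card)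
        (push (fun (x : Fin n → Bool) (i : J) => x i.1) X)
        (push (fun (x : Fin n → Bool) (i : J) => x i.1) Y) ∧
    0.3 * ε < tv (push (fun (x : Fin n → Bool) (i : J) => x i.1) X)
        (push (fun (x : Fin n → Bool) (i : J) => x i.1) Y) := by
  set f : (Fin n → Bool) → (J → Bool) := fun x i => x i.1
  set dJ : (J → Bool) → (J → Bool) → ℝ := fun u v => (hammingDist u v : ℝ) / J.card
  have hdJ : ∀ u v, 0 ≤ dJ u v := fun u v => by positivity
  have hdJ_le_one : ∀ u v, dJ u v ≤ 1 := fun u v => by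
    simpa only [Fintype.card_coe] using hammingDist_div_card_le_one u v
  have hlift : emd relHamming X Y ≤ 2 * emd dJ (push f X) (push f Y) + 0.4 * ε :=
    emd_le_mul_emd_push_add f (fun x y => by unfold relHamming; positivity) two_pos hX hY
      fun x y hx hy => by linarith [hJ x y hx hy]
  have hemd : 0.3 * ε < emd dJ (push f X) (push f Y) := by linarith
  exact ⟨hemd, hemd.trans_le <| emd_le_tv hdJ (fun u => by simp [dJ]) hdJ_le_one (hX.push f)
    (hY.push f)⟩

/-- if `X` and `Y` are far in Hamming EMD and the coordinate set `J` roughly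
preserves pairwise distances on their supports, then the projected distributions `X_J`, `Y_J`
are `0.3ε`-far both in Hamming EMD and in total variation distance. -/
theorem projected_distributions_far {n m' m'' : ℕ} (hn : 0 < n) (ε : ℝ) (hε : 0 < ε)
    (X Y : (Fin n → Bool) → ℝ) (hX : IsDist X) (hY : IsDist Y)
    (hmX : suppCard X ≤ m') (hmY : suppCard Y ≤ m'')
    (hfar : ε < emd relHamming X Y)
    (J : Finset (Fin n))
    (hJ : ∀ x y : Fin n → Bool, X x ≠ 0 → Y y ≠ 0 →
      0.5 * relHamming x y - 0.2 * ε ≤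
        (hammingDist (fun i : J => x i.1) (fun i : J => y i.1) : ℝ) / J.card) :
    0.3 * ε < emd (fun u v : (J → Bool) => (hammingDist u v : ℝ) / J.card)
        (push (fun (x : Fin n → Bool) (i : J) => x i.1) X)
        (push (fun (x : Fin n → Bool) (i : J) => x i.1) Y) ∧
    0.3 * ε < tv (push (fun (x : Fin n → Bool) (i : J) => x i.1) X)
        (push (fun (x : Fin n → Bool) (i : J) => x i.1) Y) :=
  projected_distributions_far_general ε X Y hX hY hfar J hJ
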